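/- arXiv:2408.09626 — 2 statements merged into one kernel-verified Lean document; each statement's English description precedes it below -/
import Mathlib

section
/- Let At be finite, T monotone, I ⊆ At, p ∈ At, and S ⊆ At with p ∉ T(At \ (S ∪ {p})) (so the negative entailment nogood γ⁻(p,S) = {Tβ_O(p)} ∪ {Fs | s ∈ S} exists). If the induced assignment A of I contains Fs for all s ∈ S (i.e., S ∩ I = ∅), then p ∉ T(I \ {p}), hence Fβ_O(p) ∈ A and γ⁻(p,S) ⊄ A. -/
/-- The induced assignment of `I` over variables `At ⊕ At`, where `Sum.inr p`
is the ontology-support variable `β_O(p)`. -/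
def inducedA {At : Type*} (T : Set At → Set At) (I : Set At) :
    Set (Bool × (At ⊕ At)) :=
  {σ | match σ with
    | (true, Sum.inl p) => p ∈ I
    | (false, Sum.inl p) => p ∉ I
    | (true, Sum.inr p) => p ∈ T (I \ {p})
    | (false, Sum.inr p) => p ∉ T (I \ {p})}

/-- The negative entailment nogood `γ⁻(p,S) = {T β_O(p)} ∪ {F s | s ∈ S}`. -/
def negEntNogood {At : Type*} (p : At) (S : Set At) :
    Set (Bool × (At ⊕ At)) :=
  insert ((true, Sum.inr p) : Bool × (At ⊕ At))
    {σ | ∃ s ∈ S, σ = (false, Sum.inl s)}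

theorem induced_avoids_negative_entailment_nogood {At : Type*} [Fintype At]
    (T : Set At → Set At) (hT : Monotone T) (I : Set At)
    (p : At) (S : Set At)
    (hent : p ∉ T (Set.univ \ (S ∪ {p}))) (hS : S ∩ I = ∅) :
    p ∉ T (I \ {p}) ∧
    ((false, Sum.inr p) : Bool × (At ⊕ At)) ∈ inducedA T I ∧
    ¬ negEntNogood p S ⊆ inducedA T I := by
  have hsub : I \ {p} ⊆ Set.univ \ (S ∪ {p}) := by
    intro x hx
    refine ⟨trivial, ?_⟩
    rintro (hxS | hxp)
    · exact (Set.eq_empty_iff_forall_notMem.mp hS x) ⟨hxS, hx.1⟩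
    · exact hx.2 hxp
  have hnp : p ∉ T (I \ {p}) := fun h => hent (hT hsub h)
  refine ⟨hnp, hnp, fun hsub' => ?_⟩
  have : ((true, Sum.inr p) : Bool × (At ⊕ At)) ∈ inducedA T I :=
    hsub' (Set.mem_insert _ _)
  exact hnp this
end

section
/- Let P be a finite rule base over atoms At whose dependency graph G(P) (edge a → b iff some rule r has a ∈ head(r), b ∈ body⁺(r)) is acyclic, and let T be the trivial operator T(S) = S (empty ontology). If I ⊆ At satisfies every rule of P and every a ∈ I is rule-supported in I (there is r with a ∈ head(r), body⁺(r) ⊆ I, body⁻(r) ∩ I = ∅, head(r) ∩ I = {a}), then no nonempty subset L ⊆ I has the property that every rule r with head(r) ∩ L ≠ ∅ and I ⊨ Body(r) and head(r) ∩ I ⊆ L satisfies body⁺(r) ∩ L ≠ ∅. -/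
/-- A disjunctive rule with head, positive body and negative body. -/
structure Rule (At : Type*) where
  head : Set At
  pos : Set At
  neg : Set At

/-- `I ⊨ Body(r)`. -/
def bodySat {At : Type*} (I : Set At) (r : Rule At) : Prop :=
  r.pos ⊆ I ∧ r.neg ∩ I = ∅

/-- `I` satisfies rule `r`. -/
def satRule {At : Type*} (I : Set At) (r : Rule At) : Prop :=
  bodySat I r → (r.head ∩ I).Nonempty

/-- Edge of the positive dependency graph of `P`. -/
def depEdge {At : Type*} (P : List (Rule At)) (a b : At) : Prop :=
  ∃ r ∈ P, a ∈ r.head ∧ b ∈ r.pos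

theorem tight_program_no_internal_loop {At : Type*} [Fintype At]
    (P : List (Rule At))
    (hacyc : ¬ ∃ a, Relation.TransGen (depEdge P) a a)
    (I : Set At)
    (hsatAll : ∀ r ∈ P, satRule I r)
    (hsup : ∀ a ∈ I, ∃ r ∈ P, a ∈ r.head ∧ r.pos ⊆ I ∧ r.neg ∩ I = ∅ ∧
      r.head ∩ I = {a}) :
    ¬ ∃ L : Set At, L ⊆ I ∧ L.Nonempty ∧
      ∀ r ∈ P, ((r.head ∩ L).Nonempty ∧ bodySat I r ∧ r.head ∩ I ⊆ L) →
        (r.pos ∩ L).Nonempty := by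
  rintro ⟨L, hLI, ⟨a₀, ha₀⟩, hloop⟩
  -- every element of L has a depEdge-successor in L
  have hsucc : ∀ a ∈ L, ∃ b ∈ L, depEdge P a b := by
    intro a haL
    obtain ⟨r, hrP, hhead, hpos, hneg, hHI⟩ := hsup a (hLI haL)
    have hb : (r.pos ∩ L).Nonempty := by
      apply hloop r hrP
      refine ⟨⟨a, hhead, haL⟩, ⟨hpos, hneg⟩, ?_⟩
      rw [hHI]; intro x hx; rw [Set.mem_singleton_iff] at hx; exact hx ▸ haL
    obtain ⟨b, hbpos, hbL⟩ := hb
    exact ⟨b, hbL, r, hrP, hhead, hbpos⟩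
  classical
  -- choice function
  choose f hfL hfE using hsucc
  -- iterate from a₀
  let g : {x // x ∈ L} → {x // x ∈ L} := fun x => ⟨f x.1 x.2, hfL x.1 x.2⟩
  have key : ∀ n : ℕ, ∀ x : {x // x ∈ L},
      Relation.TransGen (depEdge P) x.1 ((g^[n+1] x).1) := by
    intro n
    induction n with
    | zero => intro x; exact Relation.TransGen.single (hfE x.1 x.2)
    | succ n ih =>
      intro x
      have := ih (g x)
      rw [← Function.iterate_succ_apply] at this
      exact Relation.TransGen.head (hfE x.1 x.2) this
  obtain ⟨m, n, hne, heq⟩ :=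
    Finite.exists_ne_map_eq_of_infinite (fun n : ℕ => g^[n] (⟨a₀, ha₀⟩ : {x // x ∈ L}))
  rcases hne.lt_or_gt with h | h
  · obtain ⟨k, rfl⟩ := Nat.exists_eq_add_of_lt h
    apply hacyc
    have h2 := key k (g^[m] ⟨a₀, ha₀⟩)
    rw [← Function.iterate_add_apply] at h2
    have he : (k + 1 + m) = m + k + 1 := by omega
    rw [he] at h2
    exact ⟨_, (by simpa using heq : g^[m] (⟨a₀, ha₀⟩ : {x // x ∈ L}) = g^[m+k+1] ⟨a₀, ha₀⟩) ▸ h2⟩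
  · obtain ⟨k, rfl⟩ := Nat.exists_eq_add_of_lt h
    apply hacyc
    have h2 := key k (g^[n] ⟨a₀, ha₀⟩)
    rw [← Function.iterate_add_apply] at h2
    have he : (k + 1 + n) = n + k + 1 := by omega
    rw [he] at h2
    exact ⟨_, (by simpa using heq.symm : g^[n] (⟨a₀, ha₀⟩ : {x // x ∈ L}) = g^[n+k+1] ⟨a₀, ha₀⟩) ▸ h2⟩
end
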